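/- Let g ∈ C²(ℝ) with g, g', g'' ∈ L¹(ℝ, dx), and let Δx > 0. Then |∑_{l∈ℤ} g(l·Δx)·Δx − ∫_ℝ g(x) dx| ≤ (Δx²/12) · ‖g''‖_{L¹(ℝ)}. -/

import Mathlib

/-!
On a cell `[a, a + h]`, two integrations by parts against the kernel
`K(t) = t (t - h) / 2 + h² / 12` turn `∫ K(x - a) g''(x) dx` into `∫ g` minus the trapezoid value
`h (g a + g (a + h)) / 2`, plus the boundary term `h² (g'(a + h) - g' a) / 12`. Summed over the
cells `[l h, l h + h]`, `l ∈ ℤ`, the trapezoid values add up to the Riemann sum and the boundary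
terms telescope. Both series converge: a function that is integrable together with its derivative
has summable samples, since `h |f a| ≤ ∫_cell |f| + h ∫_cell |f'|`. The error is thus
`∑_l ∫_cell K g''`, and `|K| ≤ h² / 12` on a cell gives the bound.
-/

open MeasureTheory Set intervalIntegral

theorem hasSum_comp_intCast_mul_add {M : Type*} [AddCommMonoid M] [TopologicalSpace M]
    {f : ℝ → M} {h : ℝ} (hf : Summable fun l : ℤ => f (l * h)) :
    HasSum (fun l : ℤ => f (l * h + h)) (∑' l : ℤ, f (l * h)) := by
  refine ((Equiv.addRight 1).hasSum_iff.mpr hf.hasSum).congr_fun fun l => ?_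
  simp [add_mul]

section Grid

variable {E : Type*} [NormedAddCommGroup E] [NormedSpace ℝ E] {h : ℝ}

theorem hasSum_intervalIntegral_intCast_mul {f : ℝ → E} (hf : Integrable f) (hh : 0 < h) :
    HasSum (fun l : ℤ => ∫ x in l * h..l * h + h, f x) (∫ x, f x) := by
  have hcover := iUnion_Ioc_zsmul hh
  have hsum := hasSum_integral_iUnion (fun _ => measurableSet_Ioc) (pairwise_disjoint_Ioc_zsmul h)
    (by rw [hcover]; exact hf.integrableOn)
  rw [hcover, setIntegral_univ] at hsum
  refine hsum.congr_fun fun l => ?_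
  rw [integral_of_le (by linarith), zsmul_eq_mul, zsmul_eq_mul]
  push_cast
  ring_nf

variable [CompleteSpace E] {f f' : ℝ → E} {a : ℝ}

theorem mul_norm_le_integral_norm_add_mul_norm_deriv (hf : ∀ x, HasDerivAt f (f' x) x)
    (hf' : IntervalIntegrable f' volume a (a + h)) (hh : 0 ≤ h) :
    h * ‖f a‖ ≤ ∫ x in a..a + h, (‖f x‖ + h * ‖f' x‖) := by
  have hcont : Continuous f := continuous_iff_continuousAt.mpr fun x => (hf x).continuousAt
  have hpoint : ∀ x ∈ Icc a (a + h), ‖f a‖ ≤ ‖f x‖ + ∫ t in a..a + h, ‖f' t‖ := by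
    intro x hx
    have hsub : uIcc a x ⊆ uIcc a (a + h) :=
      uIcc_subset_uIcc_left (by rwa [uIcc_of_le (by linarith)])
    have hftc : ∫ t in a..x, f' t = f x - f a :=
      integral_eq_sub_of_hasDerivAt (fun t _ => hf t) (hf'.mono_set hsub)
    calc ‖f a‖ = ‖f x - ∫ t in a..x, f' t‖ := by rw [hftc, sub_sub_cancel]
      _ ≤ ‖f x‖ + ‖∫ t in a..x, f' t‖ := norm_sub_le _ _
      _ ≤ ‖f x‖ + ∫ t in a..x, ‖f' t‖ := by gcongr; exact norm_integral_le_integral_norm hx.1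
      _ ≤ ‖f x‖ + ∫ t in a..a + h, ‖f' t‖ := by
          gcongr
          exact integral_mono_interval le_rfl hx.1 hx.2 (.of_forall fun _ => norm_nonneg _) hf'.norm
  calc h * ‖f a‖ = ∫ _ in a..a + h, ‖f a‖ := by simp
    _ ≤ ∫ x in a..a + h, (‖f x‖ + ∫ t in a..a + h, ‖f' t‖) :=
        integral_mono_on (by linarith) intervalIntegrable_const
          ((hcont.norm.intervalIntegrable _ _).add intervalIntegrable_const) hpoint
    _ = ∫ x in a..a + h, (‖f x‖ + h * ‖f' x‖) := by
        rw [integral_add (hcont.norm.intervalIntegrable _ _) intervalIntegrable_const,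
          integral_add (hcont.norm.intervalIntegrable _ _) (hf'.norm.const_mul h),
          intervalIntegral.integral_const_mul]
        simp

theorem summable_comp_intCast_mul (hf : ∀ x, HasDerivAt f (f' x) x) (hfi : Integrable f)
    (hf'i : Integrable f') (hh : 0 < h) : Summable fun l : ℤ => f (l * h) := by
  have hbound := hasSum_intervalIntegral_intCast_mul (hfi.norm.add (hf'i.norm.const_mul h)) hh
  refine Summable.of_norm_bounded (hbound.summable.mul_left h⁻¹) fun l => ?_
  rw [le_inv_mul_iff₀ hh]
  exact mul_norm_le_integral_norm_add_mul_norm_deriv hf hf'i.intervalIntegrable hh.le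

end Grid

/-- `h²/2 · B₂(t/h)`, with `B₂` the second Bernoulli polynomial. Any constant in place of `h²/12`
would do, as the boundary terms it contributes telescope over the grid; this one makes the kernel
bounded by `h²/12` on `[0, h]`. -/
noncomputable def trapezoidKernel (h t : ℝ) : ℝ := t * (t - h) / 2 + h ^ 2 / 12

theorem abs_trapezoidKernel_le {h t : ℝ} (ht : t ∈ Icc 0 h) :
    |trapezoidKernel h t| ≤ h ^ 2 / 12 := by
  obtain ⟨ht0, hth⟩ := ht
  rw [trapezoidKernel, abs_le]
  constructor <;> nlinarith [sq_nonneg (t - h / 2)]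

theorem hasDerivAt_trapezoidKernel (h t : ℝ) :
    HasDerivAt (trapezoidKernel h) (t - h / 2) t := by
  have := (((hasDerivAt_id' t).mul ((hasDerivAt_id' t).sub_const h)).div_const 2).add_const
    (h ^ 2 / 12)
  exact this.congr_deriv (by ring)

section Cell

variable {f f' f'' : ℝ → ℝ} {h : ℝ}

theorem integral_trapezoidKernel_mul {a : ℝ} (hf : ∀ x, HasDerivAt f (f' x) x)
    (hf' : ∀ x, HasDerivAt f' (f'' x) x) (hf'' : IntervalIntegrable f'' volume a (a + h)) :
    ∫ x in a..a + h, trapezoidKernel h (x - a) * f'' x =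
      (∫ x in a..a + h, f x) - h / 2 * (f a + f (a + h)) + h ^ 2 / 12 * (f' (a + h) - f' a) := by
  have hK : ∀ x, HasDerivAt (fun x => trapezoidKernel h (x - a)) (x - a - h / 2) x := fun x =>
    by simpa using (hasDerivAt_trapezoidKernel h (x - a)).comp_sub_const x a
  have hf'cont : Continuous f' := continuous_iff_continuousAt.mpr fun x => (hf' x).continuousAt
  have hlin : ∀ x, HasDerivAt (fun x => x - a - h / 2) 1 x := fun x =>
    ((hasDerivAt_id x).sub_const a).sub_const (h / 2)
  rw [integral_mul_deriv_eq_deriv_mul (fun x _ => hK x) (fun x _ => hf' x)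
      ((by fun_prop : Continuous fun x => x - a - h / 2).intervalIntegrable _ _) hf'',
    integral_mul_deriv_eq_deriv_mul (fun x _ => hlin x) (fun x _ => hf x)
      intervalIntegrable_const (hf'cont.intervalIntegrable _ _)]
  simp only [trapezoidKernel, one_mul]
  ring

theorem abs_integral_trapezoidKernel_mul_le {a : ℝ} (hh : 0 ≤ h)
    (hf'' : IntervalIntegrable f'' volume a (a + h)) :
    |∫ x in a..a + h, trapezoidKernel h (x - a) * f'' x| ≤
      h ^ 2 / 12 * ∫ x in a..a + h, |f'' x| := by
  rw [← intervalIntegral.integral_const_mul, ← Real.norm_eq_abs]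
  refine norm_integral_le_of_norm_le (by linarith) (.of_forall fun x hx => ?_)
    (hf''.abs.const_mul _)
  rw [Real.norm_eq_abs, abs_mul]
  gcongr
  exact abs_trapezoidKernel_le ⟨by linarith [hx.1], by linarith [hx.2]⟩

theorem hasSum_integral_trapezoidKernel_mul
    (hf : ∀ x, HasDerivAt f (f' x) x) (hf' : ∀ x, HasDerivAt f' (f'' x) x)
    (hfi : Integrable f) (hf'i : Integrable f') (hf''i : Integrable f'') (hh : 0 < h) :
    HasSum (fun l : ℤ => ∫ x in l * h..l * h + h, trapezoidKernel h (x - l * h) * f'' x)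
      ((∫ x, f x) - h * ∑' l : ℤ, f (l * h)) := by
  have hs := summable_comp_intCast_mul hf hfi hf'i hh
  have hs' := summable_comp_intCast_mul hf' hf'i hf''i hh
  have htrapezoid : HasSum (fun l : ℤ => f (l * h) + f (l * h + h)) (2 * ∑' l : ℤ, f (l * h)) := by
    rw [two_mul]
    exact hs.hasSum.add (hasSum_comp_intCast_mul_add hs)
  have htelescope : HasSum (fun l : ℤ => f' (l * h + h) - f' (l * h)) 0 := by
    simpa using (hasSum_comp_intCast_mul_add hs').sub hs'.hasSum
  have hsum := ((hasSum_intervalIntegral_intCast_mul hfi hh).sub (htrapezoid.mul_left (h / 2))).add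
    (htelescope.mul_left (h ^ 2 / 12))
  rw [mul_zero, add_zero, ← mul_assoc, div_mul_cancel₀ h two_ne_zero] at hsum
  exact hsum.congr_fun fun l => integral_trapezoidKernel_mul hf hf' hf''i.intervalIntegrable

end Cell

theorem riemann_sum_error_le
    (g : ℝ → ℝ) (hg : ContDiff ℝ 2 g)
    (h0 : Integrable g) (h1 : Integrable (deriv g))
    (h2 : Integrable (deriv (deriv g)))
    (Δx : ℝ) (hΔx : 0 < Δx) :
    |(∑' l : ℤ, g (l * Δx) * Δx) - ∫ x : ℝ, g x| ≤
      Δx ^ 2 / 12 * ∫ x : ℝ, |deriv (deriv g) x| := by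
  have hg' : ∀ x, HasDerivAt g (deriv g x) x := fun x =>
    (hg.differentiable (by norm_num) x).hasDerivAt
  have hg'' : ∀ x, HasDerivAt (deriv g) (deriv (deriv g) x) x := fun x =>
    (hg.differentiable_deriv_two x).hasDerivAt
  have herror := hasSum_integral_trapezoidKernel_mul hg' hg'' h0 h1 h2 hΔx
  have hbound := (hasSum_intervalIntegral_intCast_mul h2.abs hΔx).mul_left (Δx ^ 2 / 12)
  rw [tsum_mul_right, abs_sub_comm, mul_comm]
  exact herror.norm_le_of_bounded hbound fun l =>
    abs_integral_trapezoidKernel_mul_le hΔx.le h2.intervalIntegrable
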